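/- Every continuous piecewise linear function ℝ → ℝ with finitely many pieces, specifically every function of the form x ↦ c + a·x + ∑_{i=1}^m b_i · max(0, x − d_i), is ReLU-network expressible. -/

import Mathlib

/-- ReLU-network expressible functions: identity maps, post-composition with affine maps,
and application of `max 0` to a single output coordinate. -/
inductive ReLUExpr : {r s : ℕ} → ((Fin r → ℝ) → (Fin s → ℝ)) → Prop
  | id (r : ℕ) : ReLUExpr (fun x : Fin r → ℝ => x)
  | affine {r s t : ℕ} {f : (Fin r → ℝ) → (Fin s → ℝ)} (hf : ReLUExpr f)
      (A : Matrix (Fin t) (Fin s) ℝ) (c : Fin t → ℝ) :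
      ReLUExpr (fun x => A.mulVec (f x) + c)
  | relu {r s : ℕ} {f : (Fin r → ℝ) → (Fin s → ℝ)} (hf : ReLUExpr f) (i : Fin s) :
      ReLUExpr (fun x => Function.update (f x) i (max 0 (f x i)))

theorem cpwl_reluExpr (c a : ℝ) (m : ℕ) (b d : Fin m → ℝ) :
    ReLUExpr (fun x : Fin 1 → ℝ => fun _ : Fin 1 =>
      c + a * x 0 + ∑ i, b i * max 0 (x 0 - d i)) := by
  -- base values
  set v : (Fin 1 → ℝ) → Fin (m+1) → ℝ :=
    fun x => Fin.cases (x 0) (fun i => x 0 - d i) with hv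
  set g : ℕ → (Fin 1 → ℝ) → Fin (m+1) → ℝ :=
    fun k x j => if 1 ≤ j.val ∧ j.val ≤ k then max 0 (v x j) else v x j with hg
  have key : ∀ k, k ≤ m → ReLUExpr (g k) := by
    intro k hk
    induction k with
    | zero =>
        have h0 : g 0 = fun x =>
            (Matrix.of (fun (_ : Fin (m+1)) (_ : Fin 1) => (1:ℝ))).mulVec x +
              (Fin.cases 0 (fun i => -d i)) := by
          funext x j
          simp only [hg, Pi.add_apply, Matrix.mulVec, Matrix.of_apply, dotProduct,
            Fin.sum_univ_one, one_mul]
          have : ¬ (1 ≤ j.val ∧ j.val ≤ 0) := by omega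
          rw [if_neg this]
          refine Fin.cases ?_ (fun i => ?_) j <;> simp [hv, sub_eq_add_neg]
        rw [h0]
        exact ReLUExpr.affine (ReLUExpr.id 1) _ _
    | succ k ih =>
        have hk' : k < m := hk
        have ihk := ih (le_of_lt hk')
        have hstep : g (k+1) = fun x =>
            Function.update (g k x) ⟨k+1, by omega⟩ (max 0 (g k x ⟨k+1, by omega⟩)) := by
          funext x j
          have hval : g k x ⟨k+1, by omega⟩ = v x ⟨k+1, by omega⟩ := by
            simp only [hg]
            rw [if_neg (by omega)]
          by_cases hj : j = ⟨k+1, by omega⟩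
          · subst hj
            rw [Function.update_self, hval]
            simp only [hg]
            rw [if_pos (by constructor <;> omega)]
          · rw [Function.update_of_ne hj]
            have hne : j.val ≠ k+1 := fun h => hj (Fin.ext h)
            simp only [hg]
            by_cases hc : 1 ≤ j.val ∧ j.val ≤ k
            · rw [if_pos (by omega), if_pos hc]
            · rw [if_neg (by omega), if_neg hc]
        rw [hstep]
        exact ReLUExpr.relu ihk _
  have hm := key m le_rfl
  have final := ReLUExpr.affine hm
    (Matrix.of (fun (_ : Fin 1) (j : Fin (m+1)) => Fin.cases a b j)) (fun _ => c)
  convert final using 1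
  funext x j
  simp only [Pi.add_apply, Matrix.mulVec, Matrix.of_apply, dotProduct]
  rw [Fin.sum_univ_succ]
  have h0 : g m x 0 = x 0 := by
    simp only [hg]
    rw [if_neg (by simp)]
    simp [hv]
  have hs : ∀ i : Fin m, g m x i.succ = max 0 (x 0 - d i) := by
    intro i
    simp only [hg]
    rw [if_pos (by simp [Fin.val_succ])]
    simp [hv]
  simp only [Fin.cases_zero, Fin.cases_succ, h0, hs]
  ring
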